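/- For every n ≥ 1 and every subset S ⊆ [3]^n: S meets the prime conditions if and only if the pre-n-isolator of S is consistent with S5[Con,Ground,Min_n] (i.e., S5[Con,Ground,Min_n] does not prove its negation). -/

import Mathlib

namespace KripkeModal

/-- Formulas of the modal language `L_□`: atoms `T(x)`, `F(x)` for variables
`x : ℕ`, negation, conjunction, and box. -/
inductive Fml : Type
  | tt : ℕ → Fml   -- T(x)
  | ff : ℕ → Fml   -- F(x)
  | neg : Fml → Fml
  | and : Fml → Fml → Fml
  | box : Fml → Fml
deriving DecidableEq

namespace Fml

/-- Material implication, defined from `¬, ∧`. -/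
def imp (φ ψ : Fml) : Fml := neg (and φ (neg ψ))

/-- Disjunction, defined from `¬, ∧`. -/
def or (φ ψ : Fml) : Fml := neg (and (neg φ) (neg ψ))

/-- Biconditional. -/
def iff (φ ψ : Fml) : Fml := and (imp φ ψ) (imp ψ φ)

/-- Diamond: `◇φ := ¬□¬φ`. -/
def dia (φ : Fml) : Fml := neg (box (neg φ))

/-- `N(x) := ¬T(x) ∧ ¬F(x)`. -/
def Nf (x : ℕ) : Fml := and (neg (tt x)) (neg (ff x))

/-- A fixed contradiction. -/
def bot : Fml := and (tt 0) (neg (tt 0))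

end Fml

open Fml

/-- Evaluate a formula propositionally under a valuation `v` of the "atoms":
the atomic formulas `T(x)`, `F(x)` and all boxed formulas are treated as
propositional atoms. -/
def evalProp (v : Fml → Bool) : Fml → Bool
  | Fml.neg φ => !(evalProp v φ)
  | Fml.and φ ψ => evalProp v φ && evalProp v ψ
  | φ => v φ

/-- A formula is a substitution instance of a classical propositional tautology
iff it evaluates to true under every propositional valuation of its atoms. -/
def Tautology (φ : Fml) : Prop := ∀ v : Fml → Bool, evalProp v φ = true

/-- Provability in the modal system `S5[Ax]`: the smallest set of formulas
containing all substitution instances of propositional tautologies, all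
instances of K, T and 5, all formulas in `Ax`, closed under modus ponens and
necessitation.  Taking `Ax = ∅` gives `S5` itself. -/
inductive Prv (Ax : Set Fml) : Fml → Prop
  | taut {φ} : Tautology φ → Prv Ax φ
  | axK (A B : Fml) : Prv Ax (imp (box (imp A B)) (imp (box A) (box B)))
  | axT (A : Fml) : Prv Ax (imp (box A) A)
  | ax5 (A : Fml) : Prv Ax (imp (dia A) (box (dia A)))
  | axm {φ} : φ ∈ Ax → Prv Ax φ
  | mp {A B} : Prv Ax (imp A B) → Prv Ax A → Prv Ax B
  | nec {A} : Prv Ax A → Prv Ax (box A)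

/-- A system is consistent if it does not prove a contradiction. -/
def Consistent (Ax : Set Fml) : Prop := ¬ Prv Ax Fml.bot

/-- The axiom schema `Con`: `¬(T(x) ∧ F(x))`. -/
def ConAx : Set Fml := { φ | ∃ x : ℕ, φ = neg (and (tt x) (ff x)) }

/-- The axiom schema `Ground`: `(◇T(x) ∧ ◇F(x)) → ◇N(x)`. -/
def GroundAx : Set Fml :=
  { φ | ∃ x : ℕ, φ = imp (and (dia (tt x)) (dia (ff x))) (dia (Nf x)) }

/-- Conjunction of a list of formulas (empty conjunction is `¬⊥`). -/
def bigAnd : List Fml → Fml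
  | [] => Fml.neg Fml.bot
  | [φ] => φ
  | φ :: ψ :: rest => Fml.and φ (bigAnd (ψ :: rest))

/-- Disjunction of a list of formulas (the empty disjunction is the fixed
contradiction `⊥`). -/
def bigOr : List Fml → Fml
  | [] => Fml.bot
  | [φ] => φ
  | φ :: ψ :: rest => Fml.or φ (bigOr (ψ :: rest))

/-- The axiom schema `Min_n`: all instances
`(◇N(x_1) ∧ … ∧ ◇N(x_n)) → ◇(N(x_1) ∧ … ∧ N(x_n))` obtained by substituting
arbitrary (not necessarily distinct) variables for `x_1, …, x_n`. -/
def MinAx (n : ℕ) : Set Fml :=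
  { φ | ∃ l : List ℕ, l.length = n ∧
      φ = imp (bigAnd (l.map (fun x => dia (Nf x)))) (dia (bigAnd (l.map Nf))) }

/-- A formula is extensional if it contains no `□`. -/
def Extensional : Fml → Prop
  | tt _ => True
  | ff _ => True
  | Fml.neg φ => Extensional φ
  | Fml.and φ ψ => Extensional φ ∧ Extensional ψ
  | box _ => False

/-- A formula is intensional if every atomic subformula occurs within the
scope of a `□`. -/
def Intensional : Fml → Prop
  | tt _ => False
  | ff _ => False
  | Fml.neg φ => Intensional φ
  | Fml.and φ ψ => Intensional φ ∧ Intensional ψ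
  | box _ => True

/-- The set of variables occurring in a formula. -/
def vars : Fml → Set ℕ
  | tt x => {x}
  | ff x => {x}
  | Fml.neg φ => vars φ
  | Fml.and φ ψ => vars φ ∪ vars ψ
  | box φ => vars φ

/-- An `n`-formula: one whose atoms use only the variables `x_1, …, x_n`. -/
def IsNFormula (n : ℕ) (φ : Fml) : Prop := vars φ ⊆ {x | 1 ≤ x ∧ x ≤ n}

/-- A 1-formula: one whose atoms use only the single variable `x_1`. -/
abbrev Is1Formula (φ : Fml) : Prop := IsNFormula 1 φ

/-- `φ` is `Γ`-maximal for the system `S5[Ax]`. -/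
def GammaMaximal (Ax : Set Fml) (Γ : Set Fml) (φ : Fml) : Prop :=
  Consistent (Ax ∪ {φ}) ∧ φ ∈ Γ ∧
    ∀ ψ ∈ Γ, Prv Ax (imp φ ψ) ∨ Prv Ax (imp φ (neg ψ))

/-- Extensional `n`-isolators for `S5[Ax]`. -/
def ExtIsolator (n : ℕ) (Ax : Set Fml) (φ : Fml) : Prop :=
  GammaMaximal Ax {ψ | Extensional ψ ∧ IsNFormula n ψ} φ

/-- Intensional `n`-isolators for `S5[Ax]`. -/
def IntIsolator (n : ℕ) (Ax : Set Fml) (φ : Fml) : Prop :=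
  GammaMaximal Ax {ψ | Intensional ψ ∧ IsNFormula n ψ} φ

/-- An `n`-isolator for `S5[Ax]`: a consistent conjunction `ε ∧ ι` of an
extensional `n`-isolator and an intensional `n`-isolator. -/
def Isolator (n : ℕ) (Ax : Set Fml) (φ : Fml) : Prop :=
  ∃ ε ι, ExtIsolator n Ax ε ∧ IntIsolator n Ax ι ∧
    φ = Fml.and ε ι ∧ Consistent (Ax ∪ {φ})

/-- Satisfaction in a model `(W, V)` (with `V = (V1, V2)`) at a world `w`. -/
def Sat {W : Type*} (V1 V2 : ℕ → Set W) : W → Fml → Prop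
  | w, tt x => w ∈ V1 x
  | w, ff x => w ∈ V2 x
  | w, Fml.neg φ => ¬ Sat V1 V2 w φ
  | w, Fml.and φ ψ => Sat V1 V2 w φ ∧ Sat V1 V2 w ψ
  | _, box φ => ∀ v, Sat V1 V2 v φ

/-- The variable assignment satisfies the `Con` constraint. -/
def ConC {W : Type*} (V1 V2 : ℕ → Set W) : Prop := ∀ x, V1 x ∩ V2 x = ∅

/-- The variable assignment satisfies the `Ground` constraint. -/
def GroundC {W : Type*} (V1 V2 : ℕ → Set W) : Prop :=
  ∀ x, (V1 x).Nonempty → (V2 x).Nonempty → ((V1 x ∪ V2 x)ᶜ : Set W).Nonempty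

/-- The variable assignment satisfies the `Min` constraint. -/
def MinC {W : Type*} (V1 V2 : ℕ → Set W) : Prop :=
  ∀ l : List ℕ, l ≠ [] → (∀ x ∈ l, ((V1 x ∪ V2 x)ᶜ : Set W).Nonempty) →
    (⋂ x ∈ l, ((V1 x ∪ V2 x)ᶜ : Set W)).Nonempty

/-- The prime conditions for a subset `S` of the tensor `[3]^n`, realized as
`Fin n → Fin 3` where the value `0` stands for the layer `T`, `1` for `F`,
and `2` for `N` (i.e. `1, 2, 3` in the paper's numbering). -/
def PrimeConditions (n : ℕ) (S : Set (Fin n → Fin 3)) : Prop :=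
  S.Nonempty ∧
  (∀ j : Fin n, (S ∩ {a | a j = 0}).Nonempty → (S ∩ {a | a j = 1}).Nonempty →
      (S ∩ {a | a j = 2}).Nonempty) ∧
  ∀ J : Set (Fin n), J.Nonempty →
    (∀ j ∈ J, (S ∩ {a | a j = 2}).Nonempty) →
    (S ∩ ⋂ j ∈ J, {a | a j = 2}).Nonempty

/-- `χ_1 = T`, `χ_2 = F`, `χ_3 = N` (with `Fin 3` values `0, 1, 2`). -/
def chi (k : Fin 3) (x : ℕ) : Fml :=
  if k = 0 then tt x else if k = 1 then ff x else Nf x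

/-- The extensional `n`-isolator `φ_a = χ_{a_1}(x_1) ∧ … ∧ χ_{a_n}(x_n)`
associated with a tuple `a ∈ [3]^n`. -/
def tupleFml {n : ℕ} (a : Fin n → Fin 3) : Fml :=
  bigAnd ((List.finRange n).map (fun i => chi (a i) (i.1 + 1)))

open Classical in
/-- The pre-`n`-isolator of `S ⊆ [3]^n`:
`⋀_{a ∈ S} ◇φ_a ∧ ⋀_{a ∉ S} ¬◇φ_a`. -/
noncomputable def preIsolator (n : ℕ) (S : Set (Fin n → Fin 3)) : Fml :=
  bigAnd (((Finset.univ : Finset (Fin n → Fin 3)).toList).map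
    (fun a => if a ∈ S then dia (tupleFml a) else Fml.neg (dia (tupleFml a))))

/-!
If `S` meets the prime conditions, the worlds `a ∈ S`, at which `x_{i+1}` is true, false or
neither according to `a i`, form an S5 model; `Con` holds trivially, and the second and third
prime conditions are exactly what makes `Ground` and `Min_n` hold. The pre-isolator of `S` is true
at every world, so it is consistent by soundness.

Conversely, each failing prime condition yields a formula `H` (namely `⊤`, `N(x_j)` via `Ground`,
or `⋀_{j ∈ J} N(x_j)` via `Min_n`) such that the pre-isolator proves `◇H`, while every tuple
compatible with `H` lies outside `S`. Since `⋁_a φ_a` is a tautology, `H` entails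
`⋁_{a ∉ S} φ_a`, and `◇H` contradicts the conjuncts `¬◇φ_a`, `a ∉ S`, of the pre-isolator.
-/

section Propositional

variable {v : Fml → Bool}

@[simp] lemma evalProp_neg {φ : Fml} : evalProp v (neg φ) = true ↔ ¬ evalProp v φ = true := by
  simp [evalProp]

@[simp] lemma evalProp_and {φ ψ : Fml} :
    evalProp v (Fml.and φ ψ) = true ↔ evalProp v φ = true ∧ evalProp v ψ = true := by
  simp [evalProp]

@[simp] lemma evalProp_imp {φ ψ : Fml} :
    evalProp v (imp φ ψ) = true ↔ (evalProp v φ = true → evalProp v ψ = true) := by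
  simp only [imp, evalProp_neg, evalProp_and]; tauto

@[simp] lemma evalProp_dia {φ : Fml} : evalProp v (dia φ) = true ↔ ¬ v (box (neg φ)) = true := by
  simp [dia, evalProp]

@[simp] lemma evalProp_box {φ : Fml} : evalProp v (box φ) = v (box φ) := rfl

@[simp] lemma evalProp_bot : evalProp v bot = false := by
  simp [bot, evalProp]

lemma evalProp_bigAnd {l : List Fml} :
    evalProp v (bigAnd l) = true ↔ ∀ φ ∈ l, evalProp v φ = true := by
  induction l using bigAnd.induct <;> simp_all [bigAnd]

end Propositional

section Sat

variable {W : Type*} {V1 V2 : ℕ → Set W} {w : W}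

lemma sat_imp {φ ψ : Fml} : Sat V1 V2 w (imp φ ψ) ↔ (Sat V1 V2 w φ → Sat V1 V2 w ψ) := by
  simp only [imp, Sat]; tauto

lemma sat_dia {φ : Fml} : Sat V1 V2 w (dia φ) ↔ ∃ u, Sat V1 V2 u φ := by
  simp [dia, Sat]

lemma sat_Nf {x : ℕ} : Sat V1 V2 w (Nf x) ↔ w ∉ V1 x ∪ V2 x := by
  simp [Nf, Sat]

lemma sat_bigAnd {l : List Fml} : Sat V1 V2 w (bigAnd l) ↔ ∀ φ ∈ l, Sat V1 V2 w φ := by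
  induction l using bigAnd.induct <;> simp_all [bigAnd, Sat, bot]

open Classical in
lemma evalProp_decide_sat (φ : Fml) :
    evalProp (fun ψ => decide (Sat V1 V2 w ψ)) φ = true ↔ Sat V1 V2 w φ := by
  induction φ with
  | neg φ ih => simp [ih, Sat]
  | and φ ψ ihφ ihψ => simp [ihφ, ihψ, Sat]
  | _ => simp [evalProp]

end Sat

namespace Prv

variable {Ax : Set Fml}

theorem of_taut {Γ : List Fml} {φ : Fml} (hΓ : ∀ ψ ∈ Γ, Prv Ax ψ)
    (h : ∀ v, (∀ ψ ∈ Γ, evalProp v ψ = true) → evalProp v φ = true) : Prv Ax φ := by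
  induction Γ generalizing φ with
  | nil => exact taut fun v => h v (by simp)
  | cons ψ Γ ih =>
    refine mp (ih (φ := imp ψ φ) (fun χ hχ => hΓ χ (by simp [hχ])) ?_) (hΓ ψ (by simp))
    intro v hv
    simpa using fun hψ => h v (by simp_all)

theorem imp_box_of_taut {X φ : Fml} {Γ : List Fml} (hΓ : ∀ ψ ∈ Γ, Prv Ax (imp X (box ψ)))
    (h : ∀ v, (∀ ψ ∈ Γ, evalProp v ψ = true) → evalProp v φ = true) :
    Prv Ax (imp X (box φ)) := by
  induction Γ generalizing φ with
  | nil =>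
    have hφ : Prv Ax (box φ) := nec (taut fun v => h v (by simp))
    exact of_taut (Γ := [box φ]) (by simpa using hφ) (by simp_all)
  | cons ψ Γ ih =>
    have hψφ : Prv Ax (imp X (box (imp ψ φ))) :=
      ih (fun χ hχ => hΓ χ (by simp [hχ])) (fun v hv => by simpa using fun hψ => h v (by simp_all))
    exact of_taut (Γ := [_, _, _]) (by simpa using ⟨hψφ, hΓ ψ (by simp), axK ψ φ⟩)
      (by simp_all)

theorem dia_mono {φ ψ : Fml} (h : ∀ v, evalProp v φ = true → evalProp v ψ = true) :
    Prv Ax (imp (dia φ) (dia ψ)) := by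
  have hbox : Prv Ax (imp (box (neg ψ)) (box (neg φ))) :=
    imp_box_of_taut (Γ := [neg ψ]) (by simpa using taut fun v => by simp) fun v hv => by
      simp only [List.mem_singleton, forall_eq, evalProp_neg] at hv ⊢
      exact mt (h v) hv
  exact of_taut (Γ := [_]) (by simpa using hbox) (by simp; grind)

theorem neg_of_imp_dia {X H : Fml} {L : List Fml} (hH : Prv Ax (imp X (dia H)))
    (hL : ∀ A ∈ L, Prv Ax (imp X (neg (dia A))))
    (hcover : ∀ v, evalProp v H = true → ∃ A ∈ L, evalProp v A = true) :
    Prv Ax (neg X) := by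
  have hbox : Prv Ax (imp X (box (neg H))) := by
    refine imp_box_of_taut (Γ := L.map neg) ?_ ?_
    · simp only [List.mem_map, forall_exists_index, and_imp, forall_apply_eq_imp_iff₂]
      exact fun A hA => of_taut (Γ := [_]) (by simpa using hL A hA) (by simp)
    · simp only [List.mem_map, forall_exists_index, and_imp, forall_apply_eq_imp_iff₂,
        evalProp_neg]
      exact fun v hv hHv => (hcover v hHv).elim fun A ⟨hA, hAv⟩ => hv A hA hAv
  exact of_taut (Γ := [_, _]) (by simpa using ⟨hbox, hH⟩) (by simp; grind)

theorem sound {W : Type*} {V1 V2 : ℕ → Set W} (hAx : ∀ ψ ∈ Ax, ∀ w, Sat V1 V2 w ψ) {φ : Fml}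
    (h : Prv Ax φ) (w : W) : Sat V1 V2 w φ := by
  induction h generalizing w with
  | taut hφ => exact (evalProp_decide_sat _).mp (@hφ _)
  | axK A B => simp only [sat_imp, Sat]; exact fun hAB hA u => hAB u (hA u)
  | axT A => simp only [sat_imp, Sat]; exact fun hA => hA w
  | ax5 A => simp only [sat_imp, Sat, sat_dia]; exact fun h _ => h
  | axm hφ => exact hAx _ hφ w
  | mp _ _ ihAB ihA => exact sat_imp.mp (ihAB w) (ihA w)
  | nec _ ih => exact ih

end Prv

section Validity

variable {W : Type*} {V1 V2 : ℕ → Set W}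

lemma sat_of_mem_conAx (hC : ConC V1 V2) {φ : Fml} (hφ : φ ∈ ConAx) (w : W) :
    Sat V1 V2 w φ := by
  obtain ⟨x, rfl⟩ := hφ
  exact fun ⟨h1, h2⟩ => (hC x).subset ⟨h1, h2⟩

lemma sat_of_mem_groundAx (hG : GroundC V1 V2) {φ : Fml} (hφ : φ ∈ GroundAx) (w : W) :
    Sat V1 V2 w φ := by
  obtain ⟨x, rfl⟩ := hφ
  simp only [sat_imp, Sat, sat_dia, sat_Nf]
  exact fun ⟨h1, h2⟩ => hG x h1 h2

lemma sat_of_mem_minAx (hM : MinC V1 V2) {n : ℕ} {φ : Fml} (hφ : φ ∈ MinAx n) (w : W) :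
    Sat V1 V2 w φ := by
  obtain ⟨l, -, rfl⟩ := hφ
  simp only [sat_imp, sat_dia, sat_bigAnd, List.forall_mem_map, sat_Nf]
  -- `MinC` does not cover the empty list, whose instance is `⊤ → ◇⊤`.
  rcases eq_or_ne l [] with rfl | hl
  · exact fun _ => ⟨w, by simp⟩
  · intro h
    obtain ⟨u, hu⟩ := hM l hl h
    exact ⟨u, by simpa using hu⟩

end Validity

lemma PrimeConditions.inter_nonempty {n : ℕ} {S : Set (Fin n → Fin 3)} (hS : PrimeConditions n S)
    (J : Set (Fin n)) (hJ : ∀ j ∈ J, (S ∩ {a | a j = 2}).Nonempty) :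
    (S ∩ ⋂ j ∈ J, {a | a j = 2}).Nonempty := by
  rcases J.eq_empty_or_nonempty with rfl | hJne
  · simpa using hS.1
  · exact hS.2.2 J hJne hJ

section Model

variable {n : ℕ} {S : Set (Fin n → Fin 3)}

def coordVal (S : Set (Fin n → Fin 3)) (k : Fin 3) (x : ℕ) : Set S :=
  {a | ∃ i : Fin n, i.1 + 1 = x ∧ a.1 i = k}

lemma mem_coordVal {k : Fin 3} {x : ℕ} {a : S} :
    a ∈ coordVal S k x ↔ ∃ i : Fin n, i.1 + 1 = x ∧ a.1 i = k := Iff.rfl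

lemma mem_coordVal_succ {k : Fin 3} {i : Fin n} {a : S} :
    a ∈ coordVal S k (i.1 + 1) ↔ a.1 i = k := by
  simp [mem_coordVal, Fin.val_inj]

lemma notMem_coordVal_union {x : ℕ} {a : S} :
    a ∉ coordVal S 0 x ∪ coordVal S 1 x ↔ ∀ i : Fin n, i.1 + 1 = x → a.1 i = 2 := by
  have h2 : ∀ c : Fin 3, c ≠ 0 ∧ c ≠ 1 ↔ c = 2 := by decide
  simp only [mem_coordVal, Set.mem_union, not_or, not_exists, not_and, ← forall_and, h2]

lemma conC_coordVal : ConC (coordVal S 0) (coordVal S 1) := by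
  refine fun x => Set.eq_empty_of_forall_notMem fun a ⟨⟨i, hi, h0⟩, ⟨i', hi', h1⟩⟩ => ?_
  obtain rfl : i = i' := Fin.ext (by omega)
  simp [h0] at h1

lemma groundC_coordVal (hS : PrimeConditions n S) : GroundC (coordVal S 0) (coordVal S 1) := by
  intro x
  simp only [Set.Nonempty, mem_coordVal]
  rintro ⟨a, i, rfl, ha⟩ ⟨b, i', hi', hb⟩
  obtain rfl : i = i' := Fin.ext (by omega)
  obtain ⟨c, hcS, hc⟩ := hS.2.1 i ⟨a.1, a.2, ha⟩ ⟨b.1, b.2, hb⟩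
  refine ⟨⟨c, hcS⟩, notMem_coordVal_union.mpr fun i' hi => ?_⟩
  obtain rfl : i' = i := Fin.ext (by omega)
  exact hc

lemma minC_coordVal (hS : PrimeConditions n S) : MinC (coordVal S 0) (coordVal S 1) := by
  intro l _ hl
  obtain ⟨c, hcS, hc⟩ := hS.inter_nonempty {j | j.1 + 1 ∈ l} fun j hj => by
    obtain ⟨a, ha⟩ := hl _ hj
    exact ⟨a.1, a.2, notMem_coordVal_union.mp ha j rfl⟩
  simp only [Set.mem_iInter, Set.mem_ofPred_eq] at hc
  refine ⟨⟨c, hcS⟩, Set.mem_iInter₂.mpr fun x hx => notMem_coordVal_union.mpr ?_⟩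
  rintro i rfl
  exact hc i hx

lemma sat_chi {k : Fin 3} {i : Fin n} {a : S} :
    Sat (coordVal S 0) (coordVal S 1) a (chi k (i.1 + 1)) ↔ a.1 i = k := by
  fin_cases k
  · exact mem_coordVal_succ
  · exact mem_coordVal_succ
  · change Sat _ _ a (Nf _) ↔ _
    rw [sat_Nf, notMem_coordVal_union]
    refine ⟨fun h => h i rfl, fun h i' hi => ?_⟩
    obtain rfl : i' = i := Fin.ext (by omega)
    exact h

lemma sat_tupleFml {a : S} {b : Fin n → Fin 3} :
    Sat (coordVal S 0) (coordVal S 1) a (tupleFml b) ↔ a.1 = b := by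
  simp [tupleFml, sat_bigAnd, sat_chi, funext_iff]

lemma sat_preIsolator (a : S) : Sat (coordVal S 0) (coordVal S 1) a (preIsolator n S) := by
  classical
  simp only [preIsolator, sat_bigAnd, List.forall_mem_map]
  intro b _
  split_ifs with hb
  · exact sat_dia.mpr ⟨(⟨b, hb⟩ : S), sat_tupleFml.mpr rfl⟩
  · exact fun h => hb (by obtain ⟨c, hc⟩ := sat_dia.mp h; exact sat_tupleFml.mp hc ▸ c.2)

end Model

theorem PrimeConditions.not_prv_neg_preIsolator {n : ℕ} {S : Set (Fin n → Fin 3)}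
    (hS : PrimeConditions n S) :
    ¬ Prv (ConAx ∪ GroundAx ∪ MinAx n) (Fml.neg (preIsolator n S)) := by
  intro h
  obtain ⟨a, ha⟩ := hS.1
  refine Prv.sound (V1 := coordVal S 0) (V2 := coordVal S 1) ?_ h ⟨a, ha⟩ (sat_preIsolator _)
  rintro φ ((hφ | hφ) | hφ)
  · exact sat_of_mem_conAx conC_coordVal hφ
  · exact sat_of_mem_groundAx (groundC_coordVal hS) hφ
  · exact sat_of_mem_minAx (minC_coordVal hS) hφ

section Refutation

@[simp] lemma chi_zero (x : ℕ) : chi 0 x = tt x := rfl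

@[simp] lemma chi_one (x : ℕ) : chi 1 x = ff x := rfl

@[simp] lemma chi_two (x : ℕ) : chi 2 x = Nf x := rfl

variable {n : ℕ} {S : Set (Fin n → Fin 3)} {v : Fml → Bool}

-- `T` takes priority, so that `φ` of this tuple holds under every valuation, `Con` or not.
def valuationTuple (n : ℕ) (v : Fml → Bool) : Fin n → Fin 3 := fun i =>
  if v (tt (i.1 + 1)) then 0 else if v (ff (i.1 + 1)) then 1 else 2

lemma evalProp_tupleFml_valuationTuple : evalProp v (tupleFml (valuationTuple n v)) = true := by
  simp only [tupleFml, evalProp_bigAnd, List.forall_mem_map, List.mem_finRange, forall_const]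
  intro i
  unfold valuationTuple
  split_ifs <;> simp_all [evalProp, Nf]

lemma valuationTuple_eq_two {i : Fin n} (h : evalProp v (Nf (i.1 + 1)) = true) :
    valuationTuple n v i = 2 := by
  simp_all [valuationTuple, Nf, evalProp]

lemma evalProp_chi_of_tupleFml {a : Fin n → Fin 3} (h : evalProp v (tupleFml a) = true)
    (i : Fin n) : evalProp v (chi (a i) (i.1 + 1)) = true := by
  simp only [tupleFml, evalProp_bigAnd, List.forall_mem_map] at h
  exact h i (List.mem_finRange i)

lemma evalProp_preIsolator :
    evalProp v (preIsolator n S) = true ↔ ∀ a, evalProp v (dia (tupleFml a)) = true ↔ a ∈ S := by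
  classical
  simp only [preIsolator, evalProp_bigAnd, List.forall_mem_map, Finset.mem_toList,
    Finset.mem_univ, forall_const]
  refine forall_congr' fun a => ?_
  split_ifs with ha <;> simp [ha]

variable {Ax : Set Fml}

lemma prv_preIsolator_imp_dia_chi {a : Fin n → Fin 3} (ha : a ∈ S) (i : Fin n) :
    Prv Ax (imp (preIsolator n S) (dia (chi (a i) (i.1 + 1)))) := by
  have hmono : Prv Ax (imp (dia (tupleFml a)) (dia (chi (a i) (i.1 + 1)))) :=
    Prv.dia_mono fun v hv => evalProp_chi_of_tupleFml hv i
  refine Prv.of_taut (Γ := [_]) (by simpa using hmono) fun v hv => ?_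
  simp only [List.mem_singleton, forall_eq, evalProp_imp] at hv ⊢
  exact fun hpre => hv ((evalProp_preIsolator.mp hpre a).mpr ha)

lemma prv_neg_preIsolator {H : Fml} (hH : Prv Ax (imp (preIsolator n S) (dia H)))
    (hcover : ∀ v, evalProp v H = true → valuationTuple n v ∉ S) :
    Prv Ax (neg (preIsolator n S)) := by
  classical
  refine Prv.neg_of_imp_dia (L := (Finset.univ.filter (· ∉ S)).toList.map tupleFml) hH ?_ ?_
  · simp only [List.mem_map, Finset.mem_toList, Finset.mem_filter, Finset.mem_univ, true_and,
      forall_exists_index, and_imp]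
    rintro _ a ha rfl
    refine Prv.taut fun v => ?_
    simp only [evalProp_imp, evalProp_neg]
    exact fun hpre hdia => ha ((evalProp_preIsolator.mp hpre a).mp hdia)
  · exact fun v hv => ⟨tupleFml (valuationTuple n v),
      List.mem_map_of_mem (by simpa using hcover v hv), evalProp_tupleFml_valuationTuple⟩

lemma prv_neg_preIsolator_of_eq_empty (hS : S = ∅) : Prv Ax (neg (preIsolator n S)) := by
  refine prv_neg_preIsolator (H := neg bot) ?_ (by simp [hS])
  exact Prv.of_taut (Γ := [_]) (by simpa using Prv.axT (Ax := Ax) (neg (neg bot)))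
    (by simp +contextual)

lemma prv_neg_preIsolator_of_ground (hG : GroundAx ⊆ Ax) (j : Fin n)
    (h0 : (S ∩ {a | a j = 0}).Nonempty) (h1 : (S ∩ {a | a j = 1}).Nonempty)
    (h2 : S ∩ {a | a j = 2} = ∅) : Prv Ax (neg (preIsolator n S)) := by
  refine prv_neg_preIsolator (H := Nf (j.1 + 1)) ?_ fun v hv hS =>
    h2.subset ⟨hS, valuationTuple_eq_two hv⟩
  obtain ⟨a, haS, ha⟩ := h0
  obtain ⟨b, hbS, hb⟩ := h1
  have hT := prv_preIsolator_imp_dia_chi (Ax := Ax) haS j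
  have hF := prv_preIsolator_imp_dia_chi (Ax := Ax) hbS j
  have hground : Prv Ax
      (imp (Fml.and (dia (tt (j.1 + 1))) (dia (ff (j.1 + 1)))) (dia (Nf (j.1 + 1)))) :=
    Prv.axm (hG ⟨_, rfl⟩)
  rw [show a j = 0 from ha, chi_zero] at hT
  rw [show b j = 1 from hb, chi_one] at hF
  exact Prv.of_taut (Γ := [_, _, _]) (by simpa using ⟨hT, hF, hground⟩) (by simp; grind)

lemma prv_neg_preIsolator_of_min (hM : MinAx n ⊆ Ax) (J : Set (Fin n)) (hJ : J.Nonempty)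
    (hN : ∀ j ∈ J, (S ∩ {a | a j = 2}).Nonempty) (hempty : S ∩ ⋂ j ∈ J, {a | a j = 2} = ∅) :
    Prv Ax (neg (preIsolator n S)) := by
  classical
  obtain ⟨j₀, hj₀⟩ := hJ
  -- `Min_n` needs exactly `n` variables: list those of `J`, padded with repetitions of `j₀`.
  let l : List ℕ := List.ofFn fun i => (if i ∈ J then i else j₀).1 + 1
  have hl : ∀ x ∈ l, ∃ j ∈ J, x = j.1 + 1 := by
    simp only [l, List.mem_ofFn, forall_exists_index]
    rintro _ i rfl
    split_ifs with hi
    exacts [⟨i, hi, rfl⟩, ⟨j₀, hj₀, rfl⟩]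
  refine prv_neg_preIsolator (H := bigAnd (l.map Nf)) ?_ fun v hv hS => hempty.subset ⟨hS, ?_⟩
  · have hmin : Prv Ax (imp (bigAnd (l.map fun x => dia (Nf x))) (dia (bigAnd (l.map Nf)))) :=
      Prv.axm (hM ⟨l, by simp [l], rfl⟩)
    have hdia : ∀ x ∈ l, Prv Ax (imp (preIsolator n S) (dia (Nf x))) := by
      intro x hx
      obtain ⟨j, hj, rfl⟩ := hl x hx
      obtain ⟨a, haS, ha⟩ := hN j hj
      simpa [show a j = 2 from ha] using prv_preIsolator_imp_dia_chi (Ax := Ax) haS j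
    have hconj : Prv Ax (imp (preIsolator n S) (bigAnd (l.map fun x => dia (Nf x)))) := by
      refine Prv.of_taut (Γ := l.map fun x => imp (preIsolator n S) (dia (Nf x)))
        (by simpa using hdia) fun v hv => ?_
      simp only [List.forall_mem_map, evalProp_imp, evalProp_bigAnd] at hv ⊢
      exact fun hpre x hx => hv x hx hpre
    exact Prv.of_taut (Γ := [_, _]) (by simpa using ⟨hconj, hmin⟩) (by simp_all)
  · simp only [evalProp_bigAnd, List.forall_mem_map] at hv
    refine Set.mem_iInter₂.mpr fun j hj => valuationTuple_eq_two (hv _ ?_)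
    simpa [l] using ⟨j, by simp [hj]⟩

end Refutation

theorem prime_iff_consistent_general (n : ℕ) (S : Set (Fin n → Fin 3)) :
    PrimeConditions n S ↔
      ¬ Prv (ConAx ∪ GroundAx ∪ MinAx n) (Fml.neg (preIsolator n S)) := by
  refine ⟨PrimeConditions.not_prv_neg_preIsolator, fun hcons => by_contra fun hS => hcons ?_⟩
  simp only [PrimeConditions, not_and_or, not_forall, Set.not_nonempty_iff_eq_empty,
    exists_prop] at hS
  rcases hS with hS | ⟨j, h0, h1, h2⟩ | ⟨J, hJ, hN, hempty⟩
  · exact prv_neg_preIsolator_of_eq_empty hS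
  · exact prv_neg_preIsolator_of_ground (fun _ => Or.inl ∘ Or.inr) j h0 h1 h2
  · exact prv_neg_preIsolator_of_min (fun _ => Or.inr) J hJ hN hempty

/-- `S ⊆ [3]^n` meets the prime conditions iff its
pre-n-isolator is consistent with S5[Con,Ground,Min_n]. -/
theorem prime_iff_consistent (n : ℕ) (hn : 1 ≤ n) (S : Set (Fin n → Fin 3)) :
    PrimeConditions n S ↔
      ¬ Prv (ConAx ∪ GroundAx ∪ MinAx n) (Fml.neg (preIsolator n S)) :=
  prime_iff_consistent_general n S

end KripkeModal
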